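/- Let G be a 2-edge-connected finite simple graph and let A be an edge subset of minimum cardinality among those satisfying y_G(A) = y_G, where y_G ≥ 2. Then y_G ≤ c(G − A) − 1. -/

import Mathlib

open SimpleGraph

/-- The number of connected components of a graph. -/
noncomputable def numComp {V : Type*} (G : SimpleGraph V) : ℕ :=
  Nat.card G.ConnectedComponent

/-- `y_G(A) = 2 c(G - A) - |A| - 1`. -/
noncomputable def yVal {V : Type*} (G : SimpleGraph V) (A : Set (Sym2 V)) : ℤ :=
  2 * (numComp (G.deleteEdges A) : ℤ) - (A.ncard : ℤ) - 1

/-- `y_G = max_{A ⊆ E(G)} y_G(A)`. -/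
noncomputable def yMax {V : Type*} (G : SimpleGraph V) : ℤ :=
  sSup { y : ℤ | ∃ A ⊆ G.edgeSet, yVal G A = y }


/-- A finite simple graph is `k`-edge-connected if it has at least two vertices and removing
fewer than `k` edges leaves it connected. -/
def EdgeConnected {V : Type*} (G : SimpleGraph V) (k : ℕ) : Prop :=
  1 < Nat.card V ∧ ∀ A ⊆ G.edgeSet, A.ncard < k → (G.deleteEdges A).Connected

/-! Deleting one edge splits at most one component in two, so `c(G - B) ≤ c(G) + |B|`. In a
2-edge-connected graph the first deleted edge does not disconnect `G`, whence `c(G - B) ≤ |B|` for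
every nonempty `B`. For nonempty `A` this gives `y_G(A) = 2 c(G - A) - |A| - 1 ≤ c(G - A) - 1`,
while `A = ∅` is ruled out by `y_G(∅) = 1 < 2`. -/

section

variable {V : Type*}

lemma numComp_eq_one_of_connected {G : SimpleGraph V} (h : G.Connected) : numComp G = 1 :=
  Nat.card_eq_one_iff_unique.mpr
    ⟨h.preconnected.subsingleton_connectedComponent, h.nonempty.map G.connectedComponentMk⟩

lemma SimpleGraph.Reachable.connectedComponentMk_eq_or_mem_of_deleteEdges_le
    {K H : SimpleGraph V} {a b u v : V} (hKH : K.deleteEdges {s(a, b)} ≤ H)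
    (h : K.Reachable u v) :
    H.connectedComponentMk u = H.connectedComponentMk v ∨
      (H.connectedComponentMk u ∈
          ({H.connectedComponentMk a, H.connectedComponentMk b} : Set _) ∧
        H.connectedComponentMk v ∈
          ({H.connectedComponentMk a, H.connectedComponentMk b} : Set _)) := by
  obtain ⟨p⟩ := h
  induction p with
  | nil => exact Or.inl rfl
  | @cons u x v hux p ih =>
    by_cases he : s(u, x) = s(a, b)
    · have hu : u = a ∨ u = b := by aesop
      have hx : x = a ∨ x = b := by aesop
      refine Or.inr ⟨by rcases hu with rfl | rfl <;> simp, ?_⟩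
      rcases ih with hxv | ⟨-, hv⟩
      · rw [← hxv]; rcases hx with rfl | rfl <;> simp
      · exact hv
    · have hux' : H.Adj u x := hKH (by simp [hux, he])
      rwa [ConnectedComponent.eq.mpr hux'.reachable]

lemma numComp_deleteEdges_singleton_le [Finite V] (K : SimpleGraph V) (e : Sym2 V) :
    numComp (K.deleteEdges {e}) ≤ numComp K + 1 := by
  classical
  induction e using Sym2.ind with
  | _ a b =>
  set K' := K.deleteEdges {s(a, b)}
  let f : K'.ConnectedComponent → K.ConnectedComponent :=
    ConnectedComponent.map (Hom.ofLE (deleteEdges_le _))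
  -- `f` identifies at most the components of `a` and `b`, so sending the latter to a new
  -- point makes it injective.
  let g : K'.ConnectedComponent → K.ConnectedComponent ⊕ Unit := fun c =>
    if c = K'.connectedComponentMk b then .inr () else .inl (f c)
  have hg : Function.Injective g := by
    intro c₁ c₂ hgc
    induction c₁ using ConnectedComponent.ind with | h u =>
    induction c₂ using ConnectedComponent.ind with | h v =>
    by_cases hu : K'.connectedComponentMk u = K'.connectedComponentMk b <;>
      by_cases hv : K'.connectedComponentMk v = K'.connectedComponentMk b <;>
      simp only [g, f, hu, hv, if_true, if_false, reduceCtorEq, Sum.inl.injEq,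
        ConnectedComponent.map_mk, Hom.ofLE_apply, ConnectedComponent.eq] at hgc
    · rw [hu, hv]
    · rcases hgc.connectedComponentMk_eq_or_mem_of_deleteEdges_le le_rfl with huv | ⟨hu', hv'⟩
      · exact huv
      · simp only [Set.mem_insert_iff, Set.mem_singleton_iff] at hu' hv'
        exact (hu'.resolve_right hu).trans (hv'.resolve_right hv).symm
  simpa [numComp, Nat.card_sum] using Nat.card_le_card_of_injective g hg

lemma numComp_deleteEdges_le_add_ncard [Finite V] (K : SimpleGraph V) (B : Set (Sym2 V)) :
    numComp (K.deleteEdges B) ≤ numComp K + B.ncard := by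
  induction B, B.toFinite using Set.Finite.induction_on with
  | empty => simp
  | @insert e B heB hB ih =>
    rw [Set.ncard_insert_of_notMem heB hB, ← Set.union_singleton, ← deleteEdges_deleteEdges]
    grw [numComp_deleteEdges_singleton_le, ih]
    omega

lemma EdgeConnected.connected {G : SimpleGraph V} {k : ℕ} (hG : EdgeConnected G k) (hk : 0 < k) :
    G.Connected := by
  simpa using hG.2 ∅ (Set.empty_subset _) (by simpa)

lemma EdgeConnected.connected_deleteEdges_singleton {G : SimpleGraph V} (hG : EdgeConnected G 2)
    (e : Sym2 V) : (G.deleteEdges {e}).Connected := by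
  rw [deleteEdges_eq_inter_edgeSet]
  refine hG.2 _ Set.inter_subset_right ?_
  grw [Set.ncard_inter_le_ncard_left _ _ (Set.toFinite _), Set.ncard_singleton]
  omega

lemma EdgeConnected.numComp_deleteEdges_le_ncard [Finite V] {G : SimpleGraph V}
    (hG : EdgeConnected G 2) {B : Set (Sym2 V)} (hB : B.Nonempty) :
    numComp (G.deleteEdges B) ≤ B.ncard := by
  obtain ⟨e, he⟩ := hB
  have hsplit : G.deleteEdges B = (G.deleteEdges {e}).deleteEdges (B \ {e}) := by
    rw [deleteEdges_deleteEdges, Set.union_sdiff_self, Set.union_eq_right.mpr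
      (Set.singleton_subset_iff.mpr he)]
  have hcard : (B \ {e}).ncard + 1 = B.ncard := Set.ncard_sdiff_singleton_add_one he
  rw [hsplit]
  grw [numComp_deleteEdges_le_add_ncard,
    numComp_eq_one_of_connected (hG.connected_deleteEdges_singleton e)]
  omega

end

theorem yMax_le_numComp_sub_one_of_two_edgeConnected_general {V : Type*} [Finite V]
    (G : SimpleGraph V) (hG : EdgeConnected G 2)
    (A : Set (Sym2 V)) (hy : yMax G = yVal G A)
    (h2 : 2 ≤ yMax G) :
    yMax G ≤ (numComp (G.deleteEdges A) : ℤ) - 1 := by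
  rcases A.eq_empty_or_nonempty with rfl | hA
  · have : yVal G ∅ = 1 := by
      simp [yVal, numComp_eq_one_of_connected (hG.connected two_pos)]
    omega
  · have := hG.numComp_deleteEdges_le_ncard hA
    rw [hy, yVal]
    omega

/-- If `G` is 2-edge-connected and `A` is a smallest edge subset with `y_G(A) = y_G ≥ 2`,
then `y_G ≤ c(G - A) - 1`. -/
theorem yMax_le_numComp_sub_one_of_two_edgeConnected {V : Type*} [Finite V]
    (G : SimpleGraph V) (hG : EdgeConnected G 2)
    (A : Set (Sym2 V)) (hA : A ⊆ G.edgeSet) (hy : yMax G = yVal G A)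
    (hmin : ∀ B ⊆ G.edgeSet, yMax G = yVal G B → A.ncard ≤ B.ncard)
    (h2 : 2 ≤ yMax G) :
    yMax G ≤ (numComp (G.deleteEdges A) : ℤ) - 1 :=
  yMax_le_numComp_sub_one_of_two_edgeConnected_general G hG A hy h2
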